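/- Let S be a finite set, D : S → [0,∞) with Σ_{x∈S} D(x) = 1, and h, c : S → {-1,1}; let ε̃ := Σ_{x : h(x) ≠ c(x)} D(x). Let 0 ≤ δ ≤ 1/5 and ε' ∈ (0, 2/3] satisfy |ε̃ - ε'| ≤ δ·ε', and set α' := (1/2)·ln((1-ε')/ε'). Define D'(x) := D(x)·exp(-α'·c(x)·h(x)) / (2·(1+2δ)·√(ε'·(1-ε'))) and D*(x) := D(x)·exp(-α'·c(x)·h(x)) / ((1-ε̃)·exp(-α') + ε̃·exp(α')). Then Σ_{x∈S} √(D'(x)·D*(x)) ≥ 1 - 3δ. -/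

import Mathlib

/-!
Both `D'` and `D*` rescale the same weights `w x = D x * exp (-α' * c x * h x)`, whose
total is the exact normalizer `Z = (1 - ε̃) e^{-α'} + ε̃ e^{α'}`; hence the overlap is
`√(Z / Z')` with `Z' = 2 (1 + 2δ) √(ε'(1 - ε'))`. For this choice of `α'`,
`√(ε'(1 - ε')) Z = (1 - ε̃) ε' + ε̃ (1 - ε')`, which `|ε̃ - ε'| ≤ δ ε'` bounds below by
`2 (1 - δ) ε'(1 - ε')`. So `Z / Z' ≥ (1 - δ) / (1 + 2δ) ≥ (1 - 3δ)²`.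
-/

open Finset Real

lemma exp_neg_mul_mul_of_sign {a c h : ℝ} (hh : h = 1 ∨ h = -1) (hc : c = 1 ∨ c = -1) :
    exp (-a * c * h) = if h = c then exp (-a) else exp a := by
  rcases hh with rfl | rfl <;> rcases hc with rfl | rfl <;> norm_num

lemma sum_mul_exp_neg_mul_mul_of_sign {α : Type*} (S : Finset α) (D h c : α → ℝ) (a : ℝ)
    (hh : ∀ x ∈ S, h x = 1 ∨ h x = -1) (hc : ∀ x ∈ S, c x = 1 ∨ c x = -1) :
    ∑ x ∈ S, D x * exp (-a * c x * h x) =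
      (∑ x ∈ S with h x = c x, D x) * exp (-a) +
        (∑ x ∈ S with h x ≠ c x, D x) * exp a := by
  rw [sum_mul, sum_mul, ← sum_ite]
  exact sum_congr rfl fun x hx => by
    rw [exp_neg_mul_mul_of_sign (hh x hx) (hc x hx)]; split_ifs <;> rfl

lemma sum_sqrt_div_mul_div_eq_sqrt_div {α : Type*} (S : Finset α) (w : α → ℝ) {a b : ℝ}
    (hw : ∀ x ∈ S, 0 ≤ w x) (hb : ∑ x ∈ S, w x = b) :
    ∑ x ∈ S, √(w x / a * (w x / b)) = √(b / a) := by
  have hb0 : 0 ≤ b := hb ▸ sum_nonneg hw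
  calc ∑ x ∈ S, √(w x / a * (w x / b)) = ∑ x ∈ S, w x / √(b * a) :=
        sum_congr rfl fun x hx => by
          rw [div_mul_div_comm, sqrt_div (mul_self_nonneg _), sqrt_mul_self (hw x hx),
            mul_comm a]
    _ = b / (√b * √a) := by rw [← sum_div, hb, sqrt_mul hb0]
    _ = √(b / a) := by rw [← div_div, div_sqrt, sqrt_div hb0]

lemma exp_half_mul_log {y : ℝ} (hy : 0 < y) : exp (1 / 2 * log y) = √y := by
  rw [one_div_mul_eq_div, ← log_sqrt hy.le, exp_log (sqrt_pos.mpr hy)]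

lemma sqrt_mul_mul_sqrt_div {a b : ℝ} (ha : 0 ≤ a) (hb : 0 < b) : √(a * b) * √(a / b) = a := by
  rw [← sqrt_mul (mul_nonneg ha hb.le), show a * b * (a / b) = a ^ 2 by field_simp, sqrt_sq ha]

lemma sqrt_mul_adaBoost_normalizer {ε : ℝ} (hε0 : 0 < ε) (hε1 : ε < 1) (t : ℝ) :
    √(ε * (1 - ε)) * ((1 - t) * exp (-(1 / 2 * log ((1 - ε) / ε)))
      + t * exp (1 / 2 * log ((1 - ε) / ε))) = (1 - t) * ε + t * (1 - ε) := by
  have hε1' : 0 < 1 - ε := sub_pos.mpr hε1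
  have hneg : -(1 / 2 * log ((1 - ε) / ε)) = 1 / 2 * log (ε / (1 - ε)) := by
    rw [log_div hε0.ne' hε1'.ne', log_div hε1'.ne' hε0.ne']; ring
  rw [hneg, exp_half_mul_log (div_pos hε0 hε1'), exp_half_mul_log (div_pos hε1' hε0)]
  have h₁ := sqrt_mul_mul_sqrt_div hε0.le hε1'
  have h₂ := sqrt_mul_mul_sqrt_div hε1'.le hε0
  rw [mul_comm (1 - ε)] at h₂
  linear_combination (1 - t) * h₁ + t * h₂

lemma two_mul_one_sub_mul_le_of_abs_sub_le {δ ε t : ℝ} (hδ : 0 ≤ δ) (hε0 : 0 ≤ ε)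
    (hε1 : ε ≤ 3 / 4) (ht : |t - ε| ≤ δ * ε) :
    2 * (1 - δ) * (ε * (1 - ε)) ≤ (1 - t) * ε + t * (1 - ε) := by
  obtain ⟨ht₁, ht₂⟩ := abs_le.mp ht
  rcases le_total ε (1 / 2) with hε | hε
  · have hlow : 0 ≤ t - ε + δ * ε := by linarith
    have hhalf : 0 ≤ 1 - 2 * ε := by linarith
    nlinarith [mul_nonneg hlow hhalf, mul_nonneg hδ hε0]
  · have hup : 0 ≤ δ * ε - (t - ε) := by linarith
    have hhalf : 0 ≤ 2 * ε - 1 := by linarith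
    have hε34 : 0 ≤ 3 - 4 * ε := by linarith
    nlinarith [mul_nonneg hup hhalf, mul_nonneg (mul_nonneg hδ hε0) hε34]

lemma sq_one_sub_three_mul_mul_le {δ : ℝ} (h0 : 0 ≤ δ) (h1 : δ ≤ 1 / 2) :
    (1 - 3 * δ) ^ 2 * (1 + 2 * δ) ≤ 1 - δ := by
  have hfactor : 0 ≤ (3 * δ + 1) * (1 - 2 * δ) := mul_nonneg (by linarith) (by linarith)
  nlinarith [mul_nonneg h0 hfactor]

/-- Fidelity-type overlap between the approximately normalized
    ('yes'-instance) update D' and the exactly normalized update D* is at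
    least 1 - 3δ. -/
theorem yes_instance_fidelity {α : Type*} (S : Finset α) (D h c : α → ℝ)
    (hD : ∀ x ∈ S, 0 ≤ D x) (hsum : ∑ x ∈ S, D x = 1)
    (hh : ∀ x ∈ S, h x = 1 ∨ h x = -1) (hc : ∀ x ∈ S, c x = 1 ∨ c x = -1)
    (δ ε' εt : ℝ) (hεt : εt = ∑ x ∈ S.filter (fun x => h x ≠ c x), D x)
    (hδ0 : 0 ≤ δ) (hδ1 : δ ≤ 1 / 5) (hε'0 : 0 < ε') (hε'1 : ε' ≤ 2 / 3)
    (happ : |εt - ε'| ≤ δ * ε')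
    (α' : ℝ) (hα' : α' = (1 / 2) * Real.log ((1 - ε') / ε'))
    (D' Dstar : α → ℝ)
    (hD' : ∀ x ∈ S, D' x =
      D x * Real.exp (-α' * c x * h x)
        / (2 * (1 + 2 * δ) * Real.sqrt (ε' * (1 - ε'))))
    (hDstar : ∀ x ∈ S, Dstar x =
      D x * Real.exp (-α' * c x * h x)
        / ((1 - εt) * Real.exp (-α') + εt * Real.exp α')) :
    1 - 3 * δ ≤ ∑ x ∈ S, Real.sqrt (D' x * Dstar x) := by
  set Z := (1 - εt) * exp (-α') + εt * exp α'
  set s := √(ε' * (1 - ε'))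
  have hs : 0 < s := sqrt_pos.mpr (by nlinarith)
  have hweights : ∑ x ∈ S, D x * exp (-α' * c x * h x) = Z := by
    have hsplit := sum_filter_add_sum_filter_not S (fun x => h x = c x) D
    rw [hsum, ← hεt] at hsplit
    rw [sum_mul_exp_neg_mul_mul_of_sign S D h c α' hh hc, ← hεt, eq_sub_of_add_eq hsplit]
  have hsZ : s * Z = (1 - εt) * ε' + εt * (1 - ε') := by
    subst hα'; exact sqrt_mul_adaBoost_normalizer hε'0 (by linarith) εt
  have hZ : 2 * (1 - δ) * s ≤ Z := by
    have hs2 : s * s = ε' * (1 - ε') := mul_self_sqrt (by nlinarith)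
    refine le_of_mul_le_mul_left ?_ hs
    calc s * (2 * (1 - δ) * s) = 2 * (1 - δ) * (ε' * (1 - ε')) := by rw [← hs2]; ring
      _ ≤ (1 - εt) * ε' + εt * (1 - ε') :=
        two_mul_one_sub_mul_le_of_abs_sub_le hδ0 hε'0.le (by linarith) happ
      _ = s * Z := hsZ.symm
  have hoverlap : ∑ x ∈ S, √(D' x * Dstar x) = √(Z / (2 * (1 + 2 * δ) * s)) := by
    rw [← sum_sqrt_div_mul_div_eq_sqrt_div S _ (fun x hx => mul_nonneg (hD x hx) (exp_pos _).le)
      hweights]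
    exact sum_congr rfl fun x hx => by rw [hD' x hx, hDstar x hx]
  rw [hoverlap]
  refine le_sqrt_of_sq_le ((le_div_iff₀ (by positivity)).mpr ?_)
  calc (1 - 3 * δ) ^ 2 * (2 * (1 + 2 * δ) * s)
        = 2 * ((1 - 3 * δ) ^ 2 * (1 + 2 * δ)) * s := by ring
    _ ≤ 2 * (1 - δ) * s := by gcongr; exact sq_one_sub_three_mul_mul_le hδ0 (by linarith)
    _ ≤ Z := hZ
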